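/- Let G be a deterministic first-order grammar, let E = E(x₁,…,xₙ) and F = F(x₁,…,xₙ) be regular terms, and suppose the word u ∈ A* exposes the equation x_i ≐ H(x₁,…,xₙ) for (E,F), i.e. E →^u x_i and F →^u H with H ≠ x_i, or vice versa. Then for all ground regular terms T₁,…,Tₙ: eqlevel(E(T₁,…,Tₙ), F(T₁,…,Tₙ)) ≤ |u| + eqlevel(T_i, H(T₁,…,Tₙ)) in ℕ ∪ {ω}. -/

import Mathlib

namespace FOGPaper

variable {S A : Type*}

/-- Extension of the single-step transition relations to words. -/
def Steps (tr : A → S → S → Prop) : List A → S → S → Prop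
  | [], s, t => t = s
  | a :: w, s, t => ∃ s', tr a s s' ∧ Steps tr w s' t

/-- The trace set of a state: the finite words it enables. -/
def traces (tr : A → S → S → Prop) (s : S) : Set (List A) :=
  {w | ∃ t, Steps tr w s t}

/-- The traces of length at most `k`. -/
def tracesLe (tr : A → S → S → Prop) (k : ℕ) (s : S) : Set (List A) :=
  {w ∈ traces tr s | w.length ≤ k}

/-- `r ∼ₖ s` : `r` and `s` enable the same words of length at most `k`. -/
def SimK (tr : A → S → S → Prop) (k : ℕ) (r s : S) : Prop :=
  tracesLe tr k r = tracesLe tr k s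

/-- `r ∼ s` : trace equivalence. -/
def Sim (tr : A → S → S → Prop) (r s : S) : Prop :=
  traces tr r = traces tr s

/-- The equivalence level in ℕ ∪ {ω}: the supremum of the `k` with `r ∼ₖ s`
(equal to `k` iff `r ∼ₖ s` and not `r ∼ₖ₊₁ s`, and to `ω = ⊤` iff `r ∼ s`). -/
noncomputable def eqLevel (tr : A → S → S → Prop) (r s : S) : ℕ∞ :=
  ⨆ k ∈ {k : ℕ | SimK tr k r s}, (k : ℕ∞)

/-- The offending words for `(r,s)` : the shortest words lying in exactly one of
`traces r`, `traces s`. -/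
def offWords (tr : A → S → S → Prop) (r s : S) : Set (List A) :=
  {w | w ∈ (traces tr r \ traces tr s) ∪ (traces tr s \ traces tr r) ∧
       ∀ v ∈ (traces tr r \ traces tr s) ∪ (traces tr s \ traces tr r),
         w.length ≤ v.length}

/-- A labelled transition system is deterministic if each `→ᵃ` is a partial function. -/
def IsDet (tr : A → S → S → Prop) : Prop :=
  ∀ a r s₁ s₂, tr a r s₁ → tr a r s₂ → s₁ = s₂

/-- The infinite traces (ω-words enabled in a state). -/
def omTraces (tr : A → S → S → Prop) (s : S) : Set (ℕ → A) :=
  {α | ∃ f : ℕ → S, f 0 = s ∧ ∀ i, tr (α i) (f i) (f (i + 1))}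

/-- Concatenation of a finite word with an infinite word. -/
def wApp (u : List A) (α : ℕ → A) : ℕ → A := fun i =>
  if h : i < u.length then u[i]'h else α (i - u.length)


/-- Possibly-infinite terms over nonterminals `N` (and variables `x₁, x₂, …`),
represented as partial labelling functions on positions (`Sum.inr i` is the
variable `xᵢ`). -/
abbrev Tm (N : Type*) := List ℕ → Option (N ⊕ ℕ)

/-- Arity of a label: nonterminals have their arity, variables have arity 0. -/
def arityOf {N : Type*} (arity : N → ℕ) : N ⊕ ℕ → ℕ
  | Sum.inl X => arity X
  | Sum.inr _ => 0

/-- Well-formed term: the domain is nonempty (contains the root) and matches the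
arities of the labels (which makes it prefix-closed). -/
def TmWF {N : Type*} (arity : N → ℕ) (E : Tm N) : Prop :=
  (E []).isSome ∧
    ∀ γ i, (E (γ ++ [i])).isSome ↔ ∃ v, E γ = some v ∧ 1 ≤ i ∧ i ≤ arityOf arity v

/-- The subterm (occurrence) of `E` at position `γ`. -/
def subAt {N : Type*} (E : Tm N) (γ : List ℕ) : Tm N := fun δ => E (γ ++ δ)

/-- A term is regular if it has only finitely many subterms. -/
def TmRegular {N : Type*} (E : Tm N) : Prop := (Set.range (subAt E)).Finite

/-- A term is finite if its domain is finite. -/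
def TmFinite {N : Type*} (E : Tm N) : Prop := {γ | (E γ).isSome}.Finite

/-- A term is ground if no variable occurs in it. -/
def TmGround {N : Type*} (E : Tm N) : Prop := ∀ γ i, E γ ≠ some (Sum.inr i)

/-- `E = E(x₁,…,xₙ)` : all variables occurring in `E` are among `x₁,…,xₙ`. -/
def VarsBdd {N : Type*} (n : ℕ) (E : Tm N) : Prop :=
  ∀ γ i, E γ = some (Sum.inr i) → 1 ≤ i ∧ i ≤ n

/-- The term consisting of the single variable `xᵢ`. -/
def varTm (N : Type*) (i : ℕ) : Tm N := fun γ => if γ = [] then some (Sum.inr i) else none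

open Classical in
/-- Substitution `E σ`: each occurrence of the variable `xᵢ` is replaced by `σ i`.
(For a well-formed `E`, the decomposition of a position through a variable
occurrence is unique, so the choice is canonical.) -/
noncomputable def subst {N : Type*} (E : Tm N) (σ : ℕ → Tm N) : Tm N := fun γ =>
  if h : ∃ p : List ℕ × ℕ × List ℕ, γ = p.1 ++ p.2.2 ∧ E p.1 = some (Sum.inr p.2.1)
  then σ h.choose.2.1 h.choose.2.2
  else E γ

/-- The term `X G₁ G₂ …` with root `X` and `i`-th child `Gs i`. -/
def node {N : Type*} (X : N) (Gs : ℕ → Tm N) : Tm N := fun γ =>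
  match γ with
  | [] => some (Sum.inl X)
  | i :: δ => Gs i δ

/-- A first-order grammar: ranked nonterminals and a finite set of root-rewriting
rules `X x₁ … xₘ →ᵃ E` where `E` is a finite term with variables among `x₁,…,xₘ`,
`m = arity X`. -/
structure FOG (N A : Type*) where
  arity : N → ℕ
  rules : Set (N × A × Tm N)
  rules_fin : rules.Finite
  rules_wf : ∀ r ∈ rules, TmFinite r.2.2 ∧ TmWF arity r.2.2 ∧ VarsBdd (arity r.1) r.2.2

/-- A grammar is deterministic: at most one rule for each pair `(X, a)`. -/
def FOG.Det {N A : Type*} (G : FOG N A) : Prop :=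
  ∀ X a E E', (X, a, E) ∈ G.rules → (X, a, E') ∈ G.rules → E = E'

/-- The transition relation of the LTS `L_G` generated by the grammar `G` on terms:
each rule `X x₁ … xₘ →ᵃ E` gives `X G₁ … Gₘ →ᵃ E(G₁,…,Gₘ)`. -/
def gstep {N A : Type*} (G : FOG N A) (a : A) (s t : Tm N) : Prop :=
  ∃ X E Gs, (X, a, E) ∈ G.rules ∧ s = node X Gs ∧ t = subst E Gs

/-!
A grammar rule rewrites only the root of a term, and substitution commutes with such a rewrite:
`(X Gs) σ = X (Gs σ)` and `(R Gs) σ = R (Gs σ)`. So a computation `E →ᵘ xᵢ` of the open term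
is also a computation `E σ →ᵘ σ i` of each instance, and likewise `F →ᵘ H` yields `F σ →ᵘ H σ`. In a deterministic LTS,
if `r →ᵘ r'` and `s →ᵘ s'`, then every word `w` separating `r'` from `s'` gives the word `u w`
separating `r` from `s`; hence `eqlevel(r, s) ≤ |u| + eqlevel(r', s')`.
-/

section Deterministic

variable {tr : A → S → S → Prop}

theorem steps_append_iff {u w : List A} {s t : S} :
    Steps tr (u ++ w) s t ↔ ∃ m, Steps tr u s m ∧ Steps tr w m t := by
  induction u generalizing s with
  | nil => simp [Steps]
  | cons a u ih =>
    simp only [List.cons_append, Steps, ih]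
    exact ⟨fun ⟨s', h, m, hu, hw⟩ => ⟨m, ⟨s', h, hu⟩, hw⟩,
      fun ⟨m, ⟨s', h, hu⟩, hw⟩ => ⟨s', h, m, hu, hw⟩⟩

theorem IsDet.steps_unique (hdet : IsDet tr) {u : List A} {s t₁ t₂ : S}
    (h₁ : Steps tr u s t₁) (h₂ : Steps tr u s t₂) : t₁ = t₂ := by
  induction u generalizing s with
  | nil => exact h₁.trans h₂.symm
  | cons a u ih =>
    obtain ⟨m₁, hm₁, hs₁⟩ := h₁
    obtain ⟨m₂, hm₂, hs₂⟩ := h₂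
    obtain rfl := hdet a s m₁ m₂ hm₁ hm₂
    exact ih hs₁ hs₂

theorem IsDet.append_mem_traces_iff (hdet : IsDet tr) {u w : List A} {s s' : S}
    (hs : Steps tr u s s') : u ++ w ∈ traces tr s ↔ w ∈ traces tr s' := by
  refine ⟨fun ⟨t, ht⟩ => ?_, fun ⟨t, ht⟩ => ⟨t, steps_append_iff.mpr ⟨s', hs, ht⟩⟩⟩
  obtain ⟨m, hm, hw⟩ := steps_append_iff.mp ht
  exact ⟨t, hdet.steps_unique hm hs ▸ hw⟩

theorem IsDet.simK_of_steps (hdet : IsDet tr) {u : List A} {r r' s s' : S}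
    (hr : Steps tr u r r') (hs : Steps tr u s s') {m : ℕ}
    (hsim : SimK tr (u.length + m) r s) : SimK tr m r' s' := by
  ext w
  have key : ∀ t t', Steps tr u t t' →
      (w ∈ tracesLe tr m t' ↔ u ++ w ∈ tracesLe tr (u.length + m) t) := fun t t' ht => by
    simp only [tracesLe, Set.mem_sep_iff, hdet.append_mem_traces_iff ht, List.length_append,
      Nat.add_le_add_iff_left]
  rw [key r r' hr, key s s' hs, hsim]

theorem le_eqLevel {k : ℕ} {r s : S} (h : SimK tr k r s) : (k : ℕ∞) ≤ eqLevel tr r s :=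
  le_iSup₂ (f := fun k (_ : k ∈ {k : ℕ | SimK tr k r s}) => (k : ℕ∞)) k h

theorem eqLevel_comm (r s : S) : eqLevel tr r s = eqLevel tr s r := by
  simp only [eqLevel, SimK, eq_comm]

theorem IsDet.eqLevel_le_length_add (hdet : IsDet tr) {u : List A} {r r' s s' : S}
    (hr : Steps tr u r r') (hs : Steps tr u s s') :
    eqLevel tr r s ≤ u.length + eqLevel tr r' s' := by
  refine iSup₂_le fun k hk => ?_
  obtain hku | hku := le_or_gt k u.length
  · exact le_add_right (by exact_mod_cast hku)
  · obtain ⟨m, rfl⟩ := Nat.exists_eq_add_of_le hku.le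
    push_cast
    exact add_le_add_right (le_eqLevel (hdet.simK_of_steps hr hs hk)) _

end Deterministic

section Substitution

variable {N : Type*}

def ThroughVar (E : Tm N) (γ : List ℕ) : Prop :=
  ∃ β j δ, γ = β ++ δ ∧ E β = some (Sum.inr j)

/-- Unlike `TmWF`, this holds for every child `Gs j` of a term `node X Gs`, including the empty
ones beyond the arity of `X`, and so it is the invariant preserved by `gstep`. -/
def VarPrefixFree (E : Tm N) : Prop :=
  ∀ β₁ β₂ δ₁ δ₂ (j₁ j₂ : ℕ), β₁ ++ δ₁ = β₂ ++ δ₂ →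
    E β₁ = some (Sum.inr j₁) → E β₂ = some (Sum.inr j₂) → β₁ = β₂

theorem subst_of_not_throughVar {E : Tm N} (σ : ℕ → Tm N) {γ : List ℕ}
    (h : ¬ ThroughVar E γ) : subst E σ γ = E γ := by
  rw [subst, dif_neg]
  rintro ⟨⟨β, j, δ⟩, hγ, hβ⟩
  exact h ⟨β, j, δ, hγ, hβ⟩

theorem VarPrefixFree.eq_of_append_eq {E : Tm N} (hE : VarPrefixFree E)
    {β δ β' δ' : List ℕ} {j j' : ℕ} (heq : β ++ δ = β' ++ δ') (hβ : E β = some (Sum.inr j))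
    (hβ' : E β' = some (Sum.inr j')) : β = β' ∧ j = j' ∧ δ = δ' := by
  obtain rfl := hE _ _ _ _ _ _ heq hβ hβ'
  rw [hβ, Option.some.injEq, Sum.inr.injEq] at hβ'
  exact ⟨rfl, hβ', List.append_cancel_left heq⟩

theorem subst_append_of_var {E : Tm N} (hE : VarPrefixFree E) {β : List ℕ} {j : ℕ}
    (hβ : E β = some (Sum.inr j)) (σ : ℕ → Tm N) (δ : List ℕ) :
    subst E σ (β ++ δ) = σ j δ := by
  have h : ∃ p : List ℕ × ℕ × List ℕ, β ++ δ = p.1 ++ p.2.2 ∧ E p.1 = some (Sum.inr p.2.1) :=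
    ⟨(β, j, δ), rfl, hβ⟩
  rw [subst, dif_pos h]
  obtain ⟨hγ, hβ'⟩ := h.choose_spec
  obtain ⟨-, hj, hδ⟩ := hE.eq_of_append_eq hγ.symm hβ' hβ
  rw [hj, hδ]

theorem exists_of_subst_eq_var {R : Tm N} (hR : VarPrefixFree R) {Gs : ℕ → Tm N}
    {q : List ℕ} {m : ℕ} (hq : subst R Gs q = some (Sum.inr m)) :
    ∃ β j ρ, q = β ++ ρ ∧ R β = some (Sum.inr j) ∧ Gs j ρ = some (Sum.inr m) := by
  by_cases hRq : ThroughVar R q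
  · obtain ⟨β, j, ρ, rfl, hβ⟩ := hRq
    rw [subst_append_of_var hR hβ] at hq
    exact ⟨β, j, ρ, rfl, hβ, hq⟩
  · rw [subst_of_not_throughVar Gs hRq] at hq
    exact absurd ⟨q, m, [], (List.append_nil q).symm, hq⟩ hRq

theorem throughVar_subst_iff {R : Tm N} (hR : VarPrefixFree R) {Gs : ℕ → Tm N}
    {γ : List ℕ} : ThroughVar (subst R Gs) γ ↔
      ∃ β j δ, γ = β ++ δ ∧ R β = some (Sum.inr j) ∧ ThroughVar (Gs j) δ := by
  constructor
  · rintro ⟨q, m, δ, rfl, hq⟩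
    obtain ⟨β, j, ρ, rfl, hβ, hρ⟩ := exists_of_subst_eq_var hR hq
    exact ⟨β, j, ρ ++ δ, List.append_assoc _ _ _, hβ, ρ, m, δ, rfl, hρ⟩
  · rintro ⟨β, j, _, rfl, hβ, β', m, ρ, rfl, hβ'⟩
    exact ⟨β ++ β', m, ρ, (List.append_assoc _ _ _).symm,
      (subst_append_of_var hR hβ Gs β').trans hβ'⟩

theorem varPrefixFree_subst {R : Tm N} (hR : VarPrefixFree R) {Gs : ℕ → Tm N}
    (hGs : ∀ j, VarPrefixFree (Gs j)) : VarPrefixFree (subst R Gs) := by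
  intro q₁ q₂ δ₁ δ₂ m₁ m₂ heq h₁ h₂
  obtain ⟨β₁, j₁, ρ₁, rfl, hβ₁, hρ₁⟩ := exists_of_subst_eq_var hR h₁
  obtain ⟨β₂, j₂, ρ₂, rfl, hβ₂, hρ₂⟩ := exists_of_subst_eq_var hR h₂
  simp only [List.append_assoc] at heq
  obtain ⟨rfl, rfl, hρ⟩ := hR.eq_of_append_eq heq hβ₁ hβ₂
  rw [hGs j₁ _ _ _ _ _ _ hρ hρ₁ hρ₂]

theorem subst_subst {R : Tm N} (hR : VarPrefixFree R) {Gs : ℕ → Tm N}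
    (hGs : ∀ j, VarPrefixFree (Gs j)) (σ : ℕ → Tm N) :
    subst (subst R Gs) σ = subst R (fun j => subst (Gs j) σ) := by
  funext γ
  by_cases hγ : ThroughVar R γ
  · obtain ⟨β, j, δ, rfl, hβ⟩ := hγ
    rw [subst_append_of_var hR hβ]
    by_cases hδ : ThroughVar (Gs j) δ
    · obtain ⟨β', m, ρ, rfl, hβ'⟩ := hδ
      have hvar : subst R Gs (β ++ β') = some (Sum.inr m) :=
        (subst_append_of_var hR hβ Gs β').trans hβ'
      rw [subst_append_of_var (hGs j) hβ', ← List.append_assoc,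
        subst_append_of_var (varPrefixFree_subst hR hGs) hvar]
    · have hnot : ¬ ThroughVar (subst R Gs) (β ++ δ) := by
        rw [throughVar_subst_iff hR]
        rintro ⟨β₂, j₂, δ₂, heq, hβ₂, hδ₂⟩
        obtain ⟨rfl, rfl, rfl⟩ := hR.eq_of_append_eq heq hβ hβ₂
        exact hδ hδ₂
      rw [subst_of_not_throughVar σ hnot, subst_append_of_var hR hβ,
        subst_of_not_throughVar σ hδ]
  · have hnot : ¬ ThroughVar (subst R Gs) γ := by
      rw [throughVar_subst_iff hR]
      rintro ⟨β, j, δ, rfl, hβ, -⟩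
      exact hγ ⟨β, j, δ, rfl, hβ⟩
    rw [subst_of_not_throughVar σ hnot, subst_of_not_throughVar Gs hγ,
      subst_of_not_throughVar _ hγ]

theorem throughVar_node_iff {X : N} {Gs : ℕ → Tm N} {γ : List ℕ} :
    ThroughVar (node X Gs) γ ↔ ∃ j δ, γ = j :: δ ∧ ThroughVar (Gs j) δ := by
  constructor
  · rintro ⟨_ | ⟨j, β⟩, m, ρ, rfl, hβ⟩
    · simp [node] at hβ
    · exact ⟨j, β ++ ρ, rfl, β, m, ρ, rfl, hβ⟩
  · rintro ⟨j, _, rfl, β, m, ρ, rfl, hβ⟩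
    exact ⟨j :: β, m, ρ, rfl, hβ⟩

theorem varPrefixFree_node_iff {X : N} {Gs : ℕ → Tm N} :
    VarPrefixFree (node X Gs) ↔ ∀ j, VarPrefixFree (Gs j) := by
  constructor
  · intro h j β₁ β₂ δ₁ δ₂ j₁ j₂ heq h₁ h₂
    exact (List.cons.inj (h (j :: β₁) (j :: β₂) δ₁ δ₂ j₁ j₂ (by simp [heq]) h₁ h₂)).2
  · rintro h (_ | ⟨k₁, β₁⟩) (_ | ⟨k₂, β₂⟩) δ₁ δ₂ j₁ j₂ heq h₁ h₂
    all_goals simp only [node, reduceCtorEq, Option.some.injEq] at h₁ h₂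
    simp only [List.cons_append, List.cons.injEq] at heq
    obtain ⟨rfl, heq⟩ := heq
    rw [h k₁ _ _ _ _ _ _ heq h₁ h₂]

theorem subst_node {X : N} {Gs : ℕ → Tm N} (hGs : ∀ j, VarPrefixFree (Gs j))
    (σ : ℕ → Tm N) : subst (node X Gs) σ = node X (fun j => subst (Gs j) σ) := by
  funext γ
  by_cases hγ : ThroughVar (node X Gs) γ
  · obtain ⟨j, _, rfl, β, m, ρ, rfl, hβ⟩ := throughVar_node_iff.mp hγ
    have hβ' : node X Gs (j :: β) = some (Sum.inr m) := hβ
    exact (subst_append_of_var (varPrefixFree_node_iff.mpr hGs) hβ' σ ρ).trans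
      (subst_append_of_var (hGs j) hβ σ ρ).symm
  · rw [subst_of_not_throughVar σ hγ]
    rcases γ with _ | ⟨j, δ⟩
    · rfl
    · exact (subst_of_not_throughVar σ fun hδ => hγ (throughVar_node_iff.mpr ⟨j, δ, rfl, hδ⟩)).symm

theorem subst_varTm (i : ℕ) (σ : ℕ → Tm N) : subst (varTm N i) σ = σ i := by
  have hvar : VarPrefixFree (varTm N i) := by
    have root : ∀ β j, varTm N i β = some (Sum.inr j) → β = [] := fun β j h => by
      by_contra hne
      simp [varTm, hne] at h
    intro β₁ β₂ δ₁ δ₂ j₁ j₂ _ h₁ h₂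
    rw [root _ _ h₁, root _ _ h₂]
  funext γ
  exact subst_append_of_var hvar (β := []) (by simp [varTm]) σ γ

theorem TmWF.isSome_of_isSome_append {arity : N → ℕ} {E : Tm N} (hE : TmWF arity E)
    {β : List ℕ} (δ : List ℕ) (h : (E (β ++ δ)).isSome) : (E β).isSome := by
  induction δ using List.reverseRecOn with
  | nil => simpa using h
  | append_singleton δ i ih =>
    rw [← List.append_assoc, hE.2] at h
    obtain ⟨v, hv, -⟩ := h
    exact ih (by simp [hv])

theorem TmWF.eq_nil_of_var {arity : N → ℕ} {E : Tm N} (hE : TmWF arity E) {β ρ : List ℕ}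
    {j : ℕ} (hβ : E β = some (Sum.inr j)) (hρ : (E (β ++ ρ)).isSome) : ρ = [] := by
  rcases ρ with _ | ⟨r, ρ⟩
  · rfl
  · have hr := hE.isSome_of_isSome_append ρ (β := β ++ [r]) (by simpa using hρ)
    obtain ⟨v, hv, hr1, hr2⟩ := (hE.2 β r).mp hr
    rw [hβ, Option.some.injEq] at hv
    subst hv
    simp only [arityOf] at hr2
    omega

theorem TmWF.varPrefixFree {arity : N → ℕ} {E : Tm N} (hE : TmWF arity E) :
    VarPrefixFree E := by
  intro β₁ β₂ δ₁ δ₂ j₁ j₂ heq h₁ h₂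
  rcases List.prefix_or_prefix_of_prefix ⟨δ₁, heq⟩ ⟨δ₂, rfl⟩ with ⟨ρ, rfl⟩ | ⟨ρ, rfl⟩
  · rw [hE.eq_nil_of_var (ρ := ρ) h₁ (by simp [h₂]), List.append_nil]
  · rw [hE.eq_nil_of_var (ρ := ρ) h₂ (by simp [h₁]), List.append_nil]

end Substitution

section Grammar

variable {N : Type*} {G : FOG N A}

theorem node_inj {X X' : N} {Gs Gs' : ℕ → Tm N} (h : node X Gs = node X' Gs') :
    X = X' ∧ Gs = Gs' :=
  ⟨by simpa [node] using congrFun h [], funext fun j => funext fun δ => congrFun h (j :: δ)⟩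

theorem FOG.Det.isDet_gstep (hdet : G.Det) : IsDet (gstep G) := by
  rintro a r s₁ s₂ ⟨X, E, Gs, hr, rfl, rfl⟩ ⟨X', E', Gs', hr', heq, rfl⟩
  obtain ⟨rfl, rfl⟩ := node_inj heq
  rw [hdet X a E E' hr hr']

theorem varPrefixFree_of_gstep {a : A} {s t : Tm N} (hst : gstep G a s t)
    (hs : VarPrefixFree s) : VarPrefixFree t := by
  obtain ⟨X, R, Gs, hr, rfl, rfl⟩ := hst
  exact varPrefixFree_subst (G.rules_wf _ hr).2.1.varPrefixFree (varPrefixFree_node_iff.mp hs)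

theorem gstep_subst {a : A} {s t : Tm N} (hst : gstep G a s t) (hs : VarPrefixFree s)
    (σ : ℕ → Tm N) : gstep G a (subst s σ) (subst t σ) := by
  obtain ⟨X, R, Gs, hr, rfl, rfl⟩ := hst
  have hGs := varPrefixFree_node_iff.mp hs
  exact ⟨X, R, _, hr, subst_node hGs σ, subst_subst (G.rules_wf _ hr).2.1.varPrefixFree hGs σ⟩

theorem steps_subst {u : List A} {s t : Tm N} (h : Steps (gstep G) u s t)
    (hs : VarPrefixFree s) (σ : ℕ → Tm N) : Steps (gstep G) u (subst s σ) (subst t σ) := by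
  induction u generalizing s with
  | nil => rw [show t = s from h]; rfl
  | cons a u ih =>
    obtain ⟨s', hss', hs't⟩ := h
    exact ⟨subst s' σ, gstep_subst hss' hs σ, ih hs't (varPrefixFree_of_gstep hss' hs)⟩

end Grammar

theorem eqLevel_le_of_exposed_equation_general {N A : Type*}
    (G : FOG N A) (hdet : G.Det) (E F H : Tm N)
    (hEwf : TmWF G.arity E)
    (hFwf : TmWF G.arity F)
    (i : ℕ)
    (u : List A)
    (hexp : (Steps (gstep G) u E (varTm N i) ∧ Steps (gstep G) u F H) ∨
            (Steps (gstep G) u F (varTm N i) ∧ Steps (gstep G) u E H))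
    (σ : ℕ → Tm N) :
    eqLevel (gstep G) (subst E σ) (subst F σ) ≤
      (u.length : ℕ∞) + eqLevel (gstep G) (σ i) (subst H σ) := by
  rcases hexp with ⟨hEx, hFH⟩ | ⟨hFx, hEH⟩
  · have hEx := steps_subst hEx hEwf.varPrefixFree σ
    rw [subst_varTm] at hEx
    exact hdet.isDet_gstep.eqLevel_le_length_add hEx (steps_subst hFH hFwf.varPrefixFree σ)
  · have hFx := steps_subst hFx hFwf.varPrefixFree σ
    rw [subst_varTm] at hFx
    rw [eqLevel_comm]
    exact hdet.isDet_gstep.eqLevel_le_length_add hFx (steps_subst hEH hEwf.varPrefixFree σ)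

/-- if `u` exposes the equation `xᵢ ≐ H(x₁,…,xₙ)` for `(E,F)` then for all
ground regular `T₁,…,Tₙ` : `eqlevel(E(T₁,…,Tₙ), F(T₁,…,Tₙ)) ≤ |u| + eqlevel(Tᵢ, H(T₁,…,Tₙ))`. -/
theorem eqLevel_le_of_exposed_equation {N A : Type*} [Fintype N] [Fintype A]
    (G : FOG N A) (hdet : G.Det) (n : ℕ) (E F H : Tm N)
    (hEreg : TmRegular E) (hEwf : TmWF G.arity E) (hEvars : VarsBdd n E)
    (hFreg : TmRegular F) (hFwf : TmWF G.arity F) (hFvars : VarsBdd n F)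
    (hHvars : VarsBdd n H)
    (i : ℕ) (hi1 : 1 ≤ i) (hin : i ≤ n) (hHne : H ≠ varTm N i)
    (u : List A)
    (hexp : (Steps (gstep G) u E (varTm N i) ∧ Steps (gstep G) u F H) ∨
            (Steps (gstep G) u F (varTm N i) ∧ Steps (gstep G) u E H))
    (σ : ℕ → Tm N)
    (hσ : ∀ j, 1 ≤ j → j ≤ n → TmGround (σ j) ∧ TmRegular (σ j) ∧ TmWF G.arity (σ j)) :
    eqLevel (gstep G) (subst E σ) (subst F σ) ≤
      (u.length : ℕ∞) + eqLevel (gstep G) (σ i) (subst H σ) :=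
  eqLevel_le_of_exposed_equation_general G hdet E F H hEwf hFwf i u hexp σ

end FOGPaper
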